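/- (Norm invariance of the t-SVDM factorization.) Let M₃,…,M_p be invertible with each M_k = c_k W_k, c_k ≠ 0 and W_k orthogonal. If U ∈ ℝ^{n₁×n₁×n₃×⋯×n_p} and V ∈ ℝ^{n₂×n₂×n₃×⋯×n_p} are ⋆M-orthogonal and S ∈ ℝ^{n₁×n₂×n₃×⋯×n_p} is any tensor, then ‖U ⋆M S ⋆M Vᵀ‖_F = ‖S‖_F. -/

import Mathlib

open Matrix

/-!
Order-`p` real tensors (`p = q + 2`) are represented as families of frontal
slices: a tensor `A ∈ ℝ^{n₁ × n₂ × n₃ × ⋯ × n_p}` is a function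
`A : TI m → Matrix (Fin n₁) (Fin n₂) ℝ`, where `TI m = ∀ k : Fin q, Fin (m k)`
is the trailing multi-index `(i₃, …, i_p)` and `A i` is the frontal slice
`A(:,:,i₃,…,i_p)`.
-/

namespace TSVDM

variable {q : ℕ} {m : Fin q → ℕ}

/-- Trailing multi-index `(i₃, …, i_p)`. -/
abbrev TI (m : Fin q → ℕ) : Type := ∀ k, Fin (m k)

/-- Transform-domain tensor `Â = A ×₃ M₃ ×₄ M₄ ⋯ ×_p M_p`
(mode-`k` products along all trailing modes). -/
noncomputable def hat (M : ∀ k, Matrix (Fin (m k)) (Fin (m k)) ℝ) {a b : Type}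
    (A : TI m → Matrix a b ℝ) : TI m → Matrix a b ℝ :=
  fun i => ∑ j : TI m, (∏ k, M k (i k) (j k)) • A j

/-- Inverse transform `×₃ M₃⁻¹ ×₄ M₄⁻¹ ⋯ ×_p M_p⁻¹`. -/
noncomputable def unhat (M : ∀ k, Matrix (Fin (m k)) (Fin (m k)) ℝ) {a b : Type}
    (A : TI m → Matrix a b ℝ) : TI m → Matrix a b ℝ :=
  fun i => ∑ j : TI m, (∏ k, (M k)⁻¹ (i k) (j k)) • A j

/-- The `⋆M`-product: `A ⋆M B = (Â △ B̂) ×₃ M₃⁻¹ ⋯ ×_p M_p⁻¹`, where `△` is the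
facewise product (slice-wise matrix multiplication). -/
noncomputable def starM (M : ∀ k, Matrix (Fin (m k)) (Fin (m k)) ℝ)
    {a b c : Type} [Fintype b]
    (A : TI m → Matrix a b ℝ) (B : TI m → Matrix b c ℝ) : TI m → Matrix a c ℝ :=
  unhat M (fun i => hat M A i * hat M B i)

/-- The `⋆M`-transpose: transpose every transform-domain frontal slice. -/
noncomputable def transM (M : ∀ k, Matrix (Fin (m k)) (Fin (m k)) ℝ) {a b : Type}
    (A : TI m → Matrix a b ℝ) : TI m → Matrix b a ℝ :=
  unhat M (fun i => (hat M A i)ᵀ)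

/-- The `⋆M`-identity: all transform-domain frontal slices equal the identity matrix. -/
noncomputable def idM (M : ∀ k, Matrix (Fin (m k)) (Fin (m k)) ℝ)
    (a : Type) [DecidableEq a] : TI m → Matrix a a ℝ :=
  unhat M (fun _ => (1 : Matrix a a ℝ))

/-- `Q` is `⋆M`-orthogonal if `Qᵀ ⋆M Q = Q ⋆M Qᵀ = I`. -/
def IsStarMOrthogonal (M : ∀ k, Matrix (Fin (m k)) (Fin (m k)) ℝ)
    {a : Type} [Fintype a] [DecidableEq a] (Q : TI m → Matrix a a ℝ) : Prop :=
  starM M (transM M Q) Q = idM M a ∧ starM M Q (transM M Q) = idM M a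

/-- Frobenius norm of a tensor. -/
noncomputable def frob {a b : Type} [Fintype a] [Fintype b]
    (A : TI m → Matrix a b ℝ) : ℝ :=
  Real.sqrt (∑ i : TI m, ∑ r : a, ∑ c : b, A i r c ^ 2)

/-- Diagonal position `(j, j)`: row index. -/
def dIdx₁ {n₁ n₂ : ℕ} (j : Fin (min n₁ n₂)) : Fin n₁ :=
  ⟨j.1, lt_of_lt_of_le j.2 (Nat.min_le_left n₁ n₂)⟩

/-- Diagonal position `(j, j)`: column index. -/
def dIdx₂ {n₁ n₂ : ℕ} (j : Fin (min n₁ n₂)) : Fin n₂ :=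
  ⟨j.1, lt_of_lt_of_le j.2 (Nat.min_le_right n₁ n₂)⟩

/-- `A = U ⋆M S ⋆M Vᵀ` is a t-SVDM of `A`: `U`, `V` are `⋆M`-orthogonal, `S` is
f-diagonal (each transform-domain frontal slice is diagonal), and the diagonal
entries of each frontal slice of `Ŝ` are nonnegative and in descending order. -/
structure IsTSVDM (M : ∀ k, Matrix (Fin (m k)) (Fin (m k)) ℝ) {n₁ n₂ : ℕ}
    (A : TI m → Matrix (Fin n₁) (Fin n₂) ℝ)
    (U : TI m → Matrix (Fin n₁) (Fin n₁) ℝ)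
    (S : TI m → Matrix (Fin n₁) (Fin n₂) ℝ)
    (V : TI m → Matrix (Fin n₂) (Fin n₂) ℝ) : Prop where
  decomp : A = starM M (starM M U S) (transM M V)
  orthU : IsStarMOrthogonal M U
  orthV : IsStarMOrthogonal M V
  fdiag : ∀ (i : TI m) (a : Fin n₁) (b : Fin n₂), (a : ℕ) ≠ (b : ℕ) → hat M S i a b = 0
  nonneg : ∀ (i : TI m) (j : Fin (min n₁ n₂)), 0 ≤ hat M S i (dIdx₁ j) (dIdx₂ j)
  descend : ∀ (i : TI m) (j j' : Fin (min n₁ n₂)), j ≤ j' →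
    hat M S i (dIdx₁ j') (dIdx₂ j') ≤ hat M S i (dIdx₁ j) (dIdx₂ j)

/-- The `(j,j)`-singular tube of `S`, as a function of the trailing multi-index. -/
def tube {n₁ n₂ : ℕ} (S : TI m → Matrix (Fin n₁) (Fin n₂) ℝ)
    (j : Fin (min n₁ n₂)) : TI m → ℝ :=
  fun i => S i (dIdx₁ j) (dIdx₂ j)

/-- Frobenius norm of the `(j,j)`-singular tube of `S`. -/
noncomputable def tubeNorm {n₁ n₂ : ℕ} (S : TI m → Matrix (Fin n₁) (Fin n₂) ℝ)
    (j : Fin (min n₁ n₂)) : ℝ :=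
  Real.sqrt (∑ i : TI m, tube S j i ^ 2)

/-- `r` is the t-rank: the number of nonzero singular tubes (tubes `s₁,…,s_r`
are nonzero and the remaining ones vanish). -/
def HasTRank {n₁ n₂ : ℕ} (S : TI m → Matrix (Fin n₁) (Fin n₂) ℝ) (r : ℕ) : Prop :=
  ∀ j : Fin (min n₁ n₂), ((j : ℕ) < r ↔ tube S j ≠ 0)

/-- Keep only the first `k` lateral slices (columns of each frontal slice). -/
def truncCols {n k : ℕ} (hk : k ≤ n) {a : Type}
    (U : TI m → Matrix a (Fin n) ℝ) : TI m → Matrix a (Fin k) ℝ :=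
  fun i => Matrix.of fun r c => U i r (Fin.castLE hk c)

/-- Keep only the leading `k × k` block of each frontal slice. -/
def truncBlock {n₁ n₂ k : ℕ} (h₁ : k ≤ n₁) (h₂ : k ≤ n₂)
    (S : TI m → Matrix (Fin n₁) (Fin n₂) ℝ) : TI m → Matrix (Fin k) (Fin k) ℝ :=
  fun i => Matrix.of fun a b => S i (Fin.castLE h₁ a) (Fin.castLE h₂ b)

/-- The t-rank-`k` truncation `A_k = U_k ⋆M S_k ⋆M V_kᵀ`. -/
noncomputable def truncApprox (M : ∀ k, Matrix (Fin (m k)) (Fin (m k)) ℝ)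
    {n₁ n₂ : ℕ} (U : TI m → Matrix (Fin n₁) (Fin n₁) ℝ)
    (S : TI m → Matrix (Fin n₁) (Fin n₂) ℝ)
    (V : TI m → Matrix (Fin n₂) (Fin n₂) ℝ) (k : ℕ) (hk : k ≤ min n₁ n₂) :
    TI m → Matrix (Fin n₁) (Fin n₂) ℝ :=
  starM M
    (starM M (truncCols (le_trans hk (Nat.min_le_left _ _)) U)
      (truncBlock (le_trans hk (Nat.min_le_left _ _)) (le_trans hk (Nat.min_le_right _ _)) S))
    (transM M (truncCols (le_trans hk (Nat.min_le_right _ _)) V))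

/-- The `j`-th lateral slice `A(:,j,:,…,:)`, as an `n₁ × 1 × n₃ × ⋯ × n_p` tensor. -/
def lateral {n₁ n₂ : ℕ} (A : TI m → Matrix (Fin n₁) (Fin n₂) ℝ) (j : Fin n₂) :
    TI m → Matrix (Fin n₁) (Fin 1) ℝ :=
  fun i => Matrix.of fun r _ => A i r j

/-- The `(j,j)`-singular tube of `S` regarded as a `1 × 1 × n₃ × ⋯ × n_p` tensor. -/
def tubeT {n₁ n₂ : ℕ} (S : TI m → Matrix (Fin n₁) (Fin n₂) ℝ)
    (j : Fin (min n₁ n₂)) : TI m → Matrix (Fin 1) (Fin 1) ℝ :=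
  fun i => Matrix.of fun _ _ => S i (dIdx₁ j) (dIdx₂ j)

end TSVDM

/-!
Let `K = M₃ ⊗ ⋯ ⊗ M_p` act on the trailing multi-index, so that `Â = K A`. Since
`M_k = c_k W_k` with `W_k` orthogonal, `Kᵀ K = γ • 1` with `γ = ∏ c_k² > 0`, hence
`‖Â‖_F = √γ ‖A‖_F` for every tensor `A`. In the transform domain `U ⋆M S ⋆M Vᵀ` is
slice-wise `Û_i Ŝ_i V̂_iᵀ` with `Û_i`, `V̂_i` orthogonal matrices, and the Frobenius norm of
a matrix is invariant under orthogonal multiplication on either side.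
-/

namespace Matrix

section PiKronecker

variable {R κ : Type*} [CommSemiring R] [Fintype κ] {ι ι' ι'' : κ → Type*}

def piKronecker (A : ∀ k, Matrix (ι k) (ι' k) R) : Matrix (∀ k, ι k) (∀ k, ι' k) R :=
  of fun i j => ∏ k, A k (i k) (j k)

theorem piKronecker_transpose (A : ∀ k, Matrix (ι k) (ι' k) R) :
    (piKronecker A)ᵀ = piKronecker fun k => (A k)ᵀ :=
  rfl

theorem piKronecker_smul (c : κ → R) (A : ∀ k, Matrix (ι k) (ι' k) R) :
    piKronecker (fun k => c k • A k) = (∏ k, c k) • piKronecker A := by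
  ext i j
  simp [piKronecker, Finset.prod_mul_distrib]

theorem piKronecker_one [∀ k, DecidableEq (ι k)] :
    piKronecker (fun k => (1 : Matrix (ι k) (ι k) R)) = 1 := by
  ext i j
  simp only [piKronecker, of_apply, one_apply, Fintype.prod_boole, funext_iff]

variable [DecidableEq κ]

theorem piKronecker_mul [∀ k, Fintype (ι' k)] (A : ∀ k, Matrix (ι k) (ι' k) R)
    (B : ∀ k, Matrix (ι' k) (ι'' k) R) :
    piKronecker (fun k => A k * B k) = piKronecker A * piKronecker B := by
  ext i j
  simp only [piKronecker, of_apply, mul_apply, Fintype.prod_sum, Finset.prod_mul_distrib]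

theorem piKronecker_transpose_mul_self_of_eq_smul [∀ k, Fintype (ι k)] [∀ k, DecidableEq (ι k)]
    {A W : ∀ k, Matrix (ι k) (ι k) R} {c : κ → R} (hA : ∀ k, A k = c k • W k)
    (hW : ∀ k, (W k)ᵀ * W k = 1) :
    (piKronecker A)ᵀ * piKronecker A = (∏ k, c k ^ 2) • 1 := by
  have hAA : ∀ k, (A k)ᵀ * A k = c k ^ 2 • 1 := fun k => by
    rw [hA k, transpose_smul, smul_mul_smul_comm, hW k, sq]
  rw [piKronecker_transpose, ← piKronecker_mul]
  simp only [hAA, piKronecker_smul, piKronecker_one]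

end PiKronecker

variable {R m n l p : Type*} [CommSemiring R] [Fintype m] [Fintype n]

theorem dotProduct_self_mulVec_of_transpose_mul_self_eq_smul [DecidableEq n]
    {K : Matrix m n R} {γ : R} (hK : Kᵀ * K = γ • 1) (v : n → R) :
    (K *ᵥ v) ⬝ᵥ (K *ᵥ v) = γ * (v ⬝ᵥ v) :=
  calc (K *ᵥ v) ⬝ᵥ (K *ᵥ v) = v ⬝ᵥ ((Kᵀ * K) *ᵥ v) := by
        rw [← mulVec_mulVec, dotProduct_mulVec v Kᵀ, vecMul_transpose]
    _ = γ * (v ⬝ᵥ v) := by rw [hK, smul_mulVec, one_mulVec, dotProduct_smul, smul_eq_mul]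

theorem sum_sum_sq_eq_trace_transpose_mul_self (X : Matrix m n R) :
    ∑ r, ∑ c, X r c ^ 2 = trace (Xᵀ * X) := by
  rw [Finset.sum_comm]
  simp [trace, mul_apply, sq]

theorem trace_transpose_mul_self_of_orthogonal [Fintype l] [Fintype p] [DecidableEq m]
    [DecidableEq n] {A : Matrix l m R} {C : Matrix p n R} (hA : Aᵀ * A = 1) (hC : Cᵀ * C = 1)
    (B : Matrix m n R) :
    trace ((A * B * Cᵀ)ᵀ * (A * B * Cᵀ)) = trace (Bᵀ * B) := by
  calc trace ((A * B * Cᵀ)ᵀ * (A * B * Cᵀ)) = trace (C * (Bᵀ * (Aᵀ * A) * B * Cᵀ)) := by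
        simp only [transpose_mul, transpose_transpose, Matrix.mul_assoc]
    _ = trace (Bᵀ * B * (Cᵀ * C)) := by
        rw [hA, Matrix.mul_one, trace_mul_comm, Matrix.mul_assoc, Matrix.mul_assoc]
    _ = trace (Bᵀ * B) := by rw [hC, Matrix.mul_one]

end Matrix

namespace TSVDM

variable {q : ℕ} {m : Fin q → ℕ} {M : ∀ k, Matrix (Fin (m k)) (Fin (m k)) ℝ} {a b : Type}

theorem hat_apply (A : TI m → Matrix a b ℝ) (i : TI m) (r : a) (s : b) :
    hat M A i r s = (piKronecker M *ᵥ fun j => A j r s) i := by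
  simp [hat, mulVec, dotProduct, piKronecker, Matrix.sum_apply]

theorem unhat_apply (A : TI m → Matrix a b ℝ) (i : TI m) (r : a) (s : b) :
    unhat M A i r s = (piKronecker (fun k => (M k)⁻¹) *ᵥ fun j => A j r s) i := by
  simp [unhat, mulVec, dotProduct, piKronecker, Matrix.sum_apply]

theorem hat_unhat (hM : ∀ k, IsUnit (M k).det) (A : TI m → Matrix a b ℝ) :
    hat M (unhat M A) = A := by
  ext i r s
  have hunhat : (fun j => unhat M A j r s) = piKronecker (fun k => (M k)⁻¹) *ᵥ fun j => A j r s :=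
    funext fun j => unhat_apply A j r s
  rw [hat_apply, hunhat, mulVec_mulVec, ← piKronecker_mul]
  simp only [mul_nonsing_inv _ (hM _), piKronecker_one, one_mulVec]

theorem hat_starM (hM : ∀ k, IsUnit (M k).det) {c : Type} [Fintype b] (A : TI m → Matrix a b ℝ)
    (B : TI m → Matrix b c ℝ) (i : TI m) : hat M (starM M A B) i = hat M A i * hat M B i := by
  rw [starM, hat_unhat hM]

theorem hat_transM (hM : ∀ k, IsUnit (M k).det) (A : TI m → Matrix a b ℝ) (i : TI m) :
    hat M (transM M A) i = (hat M A i)ᵀ := by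
  rw [transM, hat_unhat hM]

theorem hat_idM (hM : ∀ k, IsUnit (M k).det) [DecidableEq a] (i : TI m) :
    hat M (idM M a) i = 1 := by
  rw [idM, hat_unhat hM]

theorem IsStarMOrthogonal.transpose_mul_self_hat [Fintype a] [DecidableEq a]
    {Q : TI m → Matrix a a ℝ} (hQ : IsStarMOrthogonal M Q) (hM : ∀ k, IsUnit (M k).det)
    (i : TI m) : (hat M Q i)ᵀ * hat M Q i = 1 := by
  rw [← hat_transM hM, ← hat_starM hM, hQ.1, hat_idM hM]

theorem frob_hat [Fintype a] [Fintype b] {γ : ℝ} (hM : (piKronecker M)ᵀ * piKronecker M = γ • 1)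
    (hγ : 0 ≤ γ) (A : TI m → Matrix a b ℝ) : frob (hat M A) = √γ * frob A := by
  have htube : ∀ r s, ∑ i, hat M A i r s ^ 2 = γ * ∑ i, A i r s ^ 2 := fun r s => by
    simpa only [hat_apply, dotProduct, sq] using
      dotProduct_self_mulVec_of_transpose_mul_self_eq_smul hM fun j => A j r s
  have hswap : ∀ f : TI m → a → b → ℝ, ∑ i, ∑ r, ∑ s, f i r s = ∑ r, ∑ s, ∑ i, f i r s :=
    fun f => Finset.sum_comm.trans (Finset.sum_congr rfl fun _ _ => Finset.sum_comm)
  unfold frob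
  rw [hswap, hswap, ← Real.sqrt_mul hγ]
  simp only [htube, Finset.mul_sum]

/-- (Norm invariance of the t-SVDM factorization.)
If `U` and `V` are `⋆M`-orthogonal then `‖U ⋆M S ⋆M Vᵀ‖_F = ‖S‖_F`. -/
theorem frob_starM_orthogonal_eq {q : ℕ} {m : Fin q → ℕ}
    (M : ∀ k, Matrix (Fin (m k)) (Fin (m k)) ℝ)
    (c : Fin q → ℝ) (W : ∀ k, Matrix (Fin (m k)) (Fin (m k)) ℝ)
    (hc : ∀ k, c k ≠ 0)
    (hW : ∀ k, W k * (W k)ᵀ = 1 ∧ (W k)ᵀ * W k = 1)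
    (hM : ∀ k, M k = c k • W k)
    {n₁ n₂ : ℕ} (U : TI m → Matrix (Fin n₁) (Fin n₁) ℝ)
    (V : TI m → Matrix (Fin n₂) (Fin n₂) ℝ)
    (hU : IsStarMOrthogonal M U) (hV : IsStarMOrthogonal M V)
    (S : TI m → Matrix (Fin n₁) (Fin n₂) ℝ) :
    frob (starM M (starM M U S) (transM M V)) = frob S := by
  have hdet : ∀ k, IsUnit (M k).det := fun k =>
    isUnit_det_of_left_inverse (B := (c k)⁻¹ • (W k)ᵀ) <| by
      rw [hM k, smul_mul_smul_comm, (hW k).2, inv_mul_cancel₀ (hc k), one_smul]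
  have hK := piKronecker_transpose_mul_self_of_eq_smul hM fun k => (hW k).2
  have hγ : 0 < ∏ k, c k ^ 2 := Finset.prod_pos fun k _ => sq_pos_of_ne_zero (hc k)
  suffices frob (hat M (starM M (starM M U S) (transM M V))) = frob (hat M S) by
    rwa [frob_hat hK hγ.le, frob_hat hK hγ.le, mul_right_inj' (Real.sqrt_pos.2 hγ).ne'] at this
  unfold frob
  congr 1
  refine Finset.sum_congr rfl fun i _ => ?_
  rw [hat_starM hdet, hat_starM hdet, hat_transM hdet, sum_sum_sq_eq_trace_transpose_mul_self,
    sum_sum_sq_eq_trace_transpose_mul_self, trace_transpose_mul_self_of_orthogonal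
      (hU.transpose_mul_self_hat hdet i) (hV.transpose_mul_self_hat hdet i)]

end TSVDM
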